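/- arXiv:cs/0502004 — 3 statements merged into one kernel-verified Lean document; each statement's English description precedes it below -/
import Mathlib

section
/- Let X, X₁, X₂, … be i.i.d. real random variables with mean 0, and let k ∈ ℕ be such that E[|X|^k] < ∞. Then E[(∑_{i=1}^n X_i)^k] = O(n^{⌊k/2⌋}); that is, there exists a constant C such that for all n ≥ 1, |E[(∑_{i=1}^n X_i)^k]| ≤ C·n^{⌊k/2⌋}. -/
/-!
Expanding `(∑ i < n, X i)^k` gives a sum over maps `p : Fin k → range n` of `∏ j, X (p j)`. By
independence the expectation of such a term is `∏ i, E[X i ^ mᵢ]`, where `mᵢ` is the number of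
`j` with `p j = i`, and it vanishes as soon as some `mᵢ = 1` because the variables are centred.
The surviving maps take every value at least twice, hence at most `⌊k/2⌋` distinct values, so
there are `O(n^⌊k/2⌋)` of them, and each surviving term is bounded by a constant depending only
on the moments of order at most `k`.
-/

open MeasureTheory ProbabilityTheory Finset

section Counting

variable {ι α : Type*} [Fintype ι] [DecidableEq α]

lemma two_mul_card_image_le_card_of_forall_ne_one {p : ι → α}
    (hp : ∀ a, #{j | p j = a} ≠ 1) : 2 * #(univ.image p) ≤ Fintype.card ι := by
  calc 2 * #(univ.image p) = ∑ _a ∈ univ.image p, 2 := by rw [sum_const, smul_eq_mul, mul_comm]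
    _ ≤ ∑ a ∈ univ.image p, #{j | p j = a} := by
        refine sum_le_sum fun a ha => ?_
        obtain ⟨j, -, rfl⟩ := mem_image.mp ha
        have : 0 < #{i | p i = p j} := card_pos.mpr ⟨j, by simp⟩
        have := hp (p j)
        omega
    _ = Fintype.card ι := (card_eq_sum_card_image p univ).symm

lemma card_powerset_filter_card_le (s : Finset α) (hs : s.Nonempty) (r : ℕ) :
    #{S ∈ s.powerset | #S ≤ r} ≤ (r + 1) * #s ^ r := by
  have hsub : {S ∈ s.powerset | #S ≤ r} ⊆ (range (r + 1)).biUnion fun t => powersetCard t s := by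
    intro S hS
    rw [mem_filter, mem_powerset] at hS
    exact mem_biUnion.mpr ⟨#S, mem_range.mpr (by omega), mem_powersetCard.mpr ⟨hS.1, rfl⟩⟩
  refine (card_le_card hsub).trans ((card_biUnion_le_card_mul _ _ (#s ^ r) fun t ht => ?_).trans_eq
    (by rw [card_range]))
  rw [card_powersetCard]
  exact (Nat.choose_le_pow _ _).trans
    (Nat.pow_le_pow_right hs.card_pos (Nat.lt_succ_iff.mp (mem_range.mp ht)))

lemma card_piFinset_filter_card_image_le [DecidableEq ι] (s : Finset α) (hs : s.Nonempty) (r : ℕ) :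
    #{p ∈ Fintype.piFinset fun _ : ι => s | #(univ.image p) ≤ r} ≤
      (r + 1) * r ^ Fintype.card ι * #s ^ r := by
  have hsub : {p ∈ Fintype.piFinset fun _ : ι => s | #(univ.image p) ≤ r} ⊆
      {S ∈ s.powerset | #S ≤ r}.biUnion fun S => Fintype.piFinset fun _ : ι => S := by
    intro p hp
    rw [mem_filter, Fintype.mem_piFinset] at hp
    refine mem_biUnion.mpr ⟨univ.image p, ?_, ?_⟩
    · rw [mem_filter, mem_powerset]
      refine ⟨fun a ha => ?_, hp.2⟩
      obtain ⟨j, -, rfl⟩ := mem_image.mp ha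
      exact hp.1 j
    · exact Fintype.mem_piFinset.mpr fun j => mem_image_of_mem p (mem_univ j)
  refine (card_le_card hsub).trans ((card_biUnion_le_card_mul _ _ (r ^ Fintype.card ι)
    fun S hS => ?_).trans ?_)
  · rw [Fintype.card_piFinset, prod_const, card_univ]
    exact Nat.pow_le_pow_left (mem_filter.mp hS).2 _
  · rw [mul_right_comm]
    exact Nat.mul_le_mul_right _ (card_powerset_filter_card_le s hs r)

end Counting

lemma pow_le_one_add_pow {a : ℝ} (ha : 0 ≤ a) {m k : ℕ} (hmk : m ≤ k) : a ^ m ≤ 1 + a ^ k := by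
  rcases le_total a 1 with h | h
  · linarith [pow_le_one₀ ha h (n := m), pow_nonneg ha k]
  · linarith [pow_le_pow_right₀ h hmk]

section Moments

variable {Ω : Type*} [MeasurableSpace Ω] {μ : Measure Ω}

lemma memLp_of_integrable_abs_pow {X : Ω → ℝ} {k : ℕ} (hX : AEStronglyMeasurable X μ)
    (hint : Integrable (fun ω => |X ω| ^ k) μ) : MemLp X k μ := by
  rcases eq_or_ne k 0 with rfl | hk
  · simpa using memLp_zero_iff_aestronglyMeasurable.mpr hX
  · rw [← integrable_norm_rpow_iff hX (by exact_mod_cast hk) (ENNReal.natCast_ne_top k)]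
    simpa [Real.rpow_natCast] using hint

lemma abs_integral_pow_le_one_add [IsProbabilityMeasure μ] {X : Ω → ℝ} {m k : ℕ} (hmk : m ≤ k)
    (hint : Integrable (fun ω => |X ω| ^ k) μ) :
    |∫ ω, X ω ^ m ∂μ| ≤ 1 + ∫ ω, |X ω| ^ k ∂μ := by
  have hbound : Integrable (fun ω => 1 + |X ω| ^ k) μ := (integrable_const 1).add hint
  calc |∫ ω, X ω ^ m ∂μ| ≤ ∫ ω, 1 + |X ω| ^ k ∂μ :=
        norm_integral_le_of_norm_le (f := fun ω => X ω ^ m) hbound (ae_of_all _ fun ω => by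
          simpa only [Real.norm_eq_abs, abs_pow] using pow_le_one_add_pow (abs_nonneg (X ω)) hmk)
    _ = 1 + ∫ ω, |X ω| ^ k ∂μ := by simp [integral_add (integrable_const 1) hint]

lemma integrable_prod_of_memLp [IsFiniteMeasure μ] {ι : Type*} [Fintype ι] {f : ι → Ω → ℝ}
    (hf : ∀ j, MemLp (f j) (Fintype.card ι) μ) : Integrable (fun ω => ∏ j, f j ω) μ := by
  rcases isEmpty_or_nonempty ι with _ | _
  · simp
  have hexp : (∑ _j : ι, ((Fintype.card ι : ℕ) : ENNReal)⁻¹)⁻¹ = 1 := by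
    rw [sum_const, card_univ, nsmul_eq_mul, ENNReal.mul_inv_cancel (by simp) (by simp), inv_one]
  rw [← memLp_one_iff_integrable, ← hexp]
  exact MemLp.prod' fun j _ => hf j

end Moments

namespace ProbabilityTheory

variable {Ω : Type*} [MeasurableSpace Ω] {μ : Measure Ω}

lemma iIndepFun.integral_finset_prod_eq_prod_integral {ι : Type*} {X : ι → Ω → ℝ}
    (hindep : iIndepFun X μ) (hX : ∀ i, AEStronglyMeasurable (X i) μ) (s : Finset ι) :
    ∫ ω, ∏ i ∈ s, X i ω ∂μ = ∏ i ∈ s, ∫ ω, X i ω ∂μ := by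
  calc ∫ ω, ∏ i ∈ s, X i ω ∂μ = ∫ ω, ∏ i : s, X i ω ∂μ :=
        integral_congr_ae (ae_of_all _ fun ω => (prod_coe_sort s fun i => X i ω).symm)
    _ = ∏ i : s, ∫ ω, X i ω ∂μ :=
        (hindep.precomp Subtype.val_injective).integral_fun_prod_eq_prod_integral fun i => hX i
    _ = ∏ i ∈ s, ∫ ω, X i ω ∂μ := prod_coe_sort s fun i => ∫ ω, X i ω ∂μ

lemma iIndepFun.integral_prod_comp_eq_prod_integral_pow {ι κ : Type*} [Fintype κ]
    [DecidableEq ι] {X : ι → Ω → ℝ} (hindep : iIndepFun X μ)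
    (hX : ∀ i, AEStronglyMeasurable (X i) μ) (p : κ → ι) :
    ∫ ω, ∏ j, X (p j) ω ∂μ = ∏ i ∈ univ.image p, ∫ ω, X i ω ^ #{j | p j = i} ∂μ := by
  have hfibres (ω : Ω) : ∏ j, X (p j) ω = ∏ i ∈ univ.image p, X i ω ^ #{j | p j = i} :=
    prod_comp (fun i => X i ω) p
  simp_rw [hfibres]
  exact (hindep.comp (fun i x => x ^ #{j | p j = i}) fun _ => by fun_prop)
    |>.integral_finset_prod_eq_prod_integral (fun i => (hX i).pow _) _

lemma iIndepFun.abs_integral_sum_pow_le {ι : Type*} [DecidableEq ι] {X : ι → Ω → ℝ} {k : ℕ}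
    (hindep : iIndepFun X μ) (hX : ∀ i, AEStronglyMeasurable (X i) μ)
    (hmem : ∀ i, MemLp (X i) k μ) (hmean : ∀ i, ∫ ω, X i ω ∂μ = 0) {M : ℝ} (hM : 1 ≤ M)
    (hmoment : ∀ i m, m ≤ k → |∫ ω, X i ω ^ m ∂μ| ≤ M) (s : Finset ι) :
    |∫ ω, (∑ i ∈ s, X i ω) ^ k ∂μ| ≤
      #{p ∈ Fintype.piFinset fun _ : Fin k => s | #(univ.image p) ≤ k / 2} * M ^ (k / 2) := by
  have := hindep.isProbabilityMeasure
  set term : (Fin k → ι) → ℝ := fun p => ∏ i ∈ univ.image p, ∫ ω, X i ω ^ #{j | p j = i} ∂μ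
  have hexpand : ∫ ω, (∑ i ∈ s, X i ω) ^ k ∂μ = ∑ p ∈ Fintype.piFinset fun _ => s, term p := by
    simp_rw [sum_pow']
    rw [integral_finsetSum _ fun p _ =>
      integrable_prod_of_memLp fun j => by simpa using hmem (p j)]
    exact sum_congr rfl fun p _ => hindep.integral_prod_comp_eq_prod_integral_pow hX p
  -- A value taken exactly once contributes a factor `∫ X i = 0`.
  have hsupport : ∀ p, term p ≠ 0 → #(univ.image p) ≤ k / 2 := by
    intro p hp
    have hfibres : ∀ i, #{j | p j = i} ≠ 1 := by
      intro i hi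
      obtain ⟨j, hj⟩ := card_eq_one.mp hi
      refine hp (prod_eq_zero (i := i) (mem_image.mpr ⟨j, mem_univ j, ?_⟩) (by simp [hi, hmean]))
      simpa using (Finset.ext_iff.mp hj j).mpr (mem_singleton_self j)
    have := two_mul_card_image_le_card_of_forall_ne_one hfibres
    rw [Fintype.card_fin] at this
    omega
  have hbound : ∀ p, #(univ.image p) ≤ k / 2 → |term p| ≤ M ^ (k / 2) := by
    intro p hp
    calc |term p| = ∏ i ∈ univ.image p, |∫ ω, X i ω ^ #{j | p j = i} ∂μ| := abs_prod _ _
      _ ≤ ∏ _i ∈ univ.image p, M := prod_le_prod (fun _ _ => abs_nonneg _)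
          fun i _ => hmoment i _ ((card_filter_le _ _).trans_eq (card_fin k))
      _ = M ^ #(univ.image p) := prod_const M
      _ ≤ M ^ (k / 2) := pow_le_pow_right₀ hM hp
  rw [hexpand, ← sum_filter_of_ne fun p _ => hsupport p]
  calc |∑ p ∈ _ with _, term p| ≤ ∑ p ∈ _ with _, |term p| := abs_sum_le_sum_abs _ _
    _ ≤ _ := by
      simpa using sum_le_card_nsmul _ _ _ fun p hp => hbound p (mem_filter.mp hp).2

end ProbabilityTheory

theorem sum_pow_moment_bigO_general
    {Ω : Type*} [MeasurableSpace Ω] (μ : Measure Ω) [IsProbabilityMeasure μ]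
    (X : ℕ → Ω → ℝ)
    (hindep : iIndepFun X μ)
    (hident : ∀ i, IdentDistrib (X i) (X 0) μ μ)
    (hmean : ∫ ω, X 0 ω ∂μ = 0)
    (k : ℕ)
    (hmom : Integrable (fun ω => |X 0 ω| ^ k) μ) :
    ∃ C : ℝ, ∀ n : ℕ, 1 ≤ n →
      |∫ ω, (∑ i ∈ Finset.range n, X i ω) ^ k ∂μ| ≤ C * (n : ℝ) ^ (k / 2) := by
  set M := 1 + ∫ ω, |X 0 ω| ^ k ∂μ
  have hX i : AEStronglyMeasurable (X i) μ := (hident i).aemeasurable_fst.aestronglyMeasurable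
  have hmem i : MemLp (X i) k μ :=
    (hident i).memLp_iff.mpr (memLp_of_integrable_abs_pow (hX 0) hmom)
  have hmoment i m (hm : m ≤ k) : |∫ ω, X i ω ^ m ∂μ| ≤ M := by
    have hsame := ((hident i).comp (measurable_id.pow_const m)).integral_eq
    simp only [Function.comp_def, id] at hsame
    rw [hsame]
    exact abs_integral_pow_le_one_add hm hmom
  have hM : 1 ≤ M := le_add_of_nonneg_right (integral_nonneg fun ω => by positivity)
  refine ⟨((k / 2 + 1) * (k / 2) ^ k : ℕ) * M ^ (k / 2), fun n hn => ?_⟩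
  have hcount := card_piFinset_filter_card_image_le (ι := Fin k) (range n)
    (nonempty_range_iff.mpr (by omega)) (k / 2)
  refine (hindep.abs_integral_sum_pow_le hX hmem (fun i => ((hident i).integral_eq.trans hmean))
    hM hmoment (range n)).trans ?_
  rw [card_range, Fintype.card_fin] at hcount
  calc _ ≤ (((k / 2 + 1) * (k / 2) ^ k * n ^ (k / 2) : ℕ) : ℝ) * M ^ (k / 2) := by gcongr
    _ = _ := by push_cast; ring

/-- Theorem `devsumasym`: if `X, X₁, X₂, …` are i.i.d. real random
variables with mean `0` whose first `k` moments exist, then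
`E[(∑_{i=1}^n X_i)^k] = O(n^⌊k/2⌋)`. -/
theorem sum_pow_moment_bigO
    {Ω : Type*} [MeasurableSpace Ω] (μ : Measure Ω) [IsProbabilityMeasure μ]
    (X : ℕ → Ω → ℝ)
    (hmeas : ∀ i, Measurable (X i))
    (hindep : iIndepFun X μ)
    (hident : ∀ i, IdentDistrib (X i) (X 0) μ μ)
    (hmean : ∫ ω, X 0 ω ∂μ = 0)
    (k : ℕ)
    (hmom : Integrable (fun ω => |X 0 ω| ^ k) μ) :
    ∃ C : ℝ, ∀ n : ℕ, 1 ≤ n →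
      |∫ ω, (∑ i ∈ Finset.range n, X i ω) ^ k ∂μ| ≤ C * (n : ℝ) ^ (k / 2) :=
  sum_pow_moment_bigO_general μ X hindep hident hmean k hmom
end

section
/- Let X, X₁, X₂, … be i.i.d. real random variables with finite variance, let μ* = E[X], and define μ̂_n = (n₀·x₀ + ∑_{i=1}^n X_i)/(n + n₀) for fixed constants x₀ ∈ ℝ and n₀ > 0 (with μ̂_0 = x₀). Then ∑_{i=0}^{n−1} E[(μ̂_i − μ*)²] = var(X)·ln n + O(1); that is, there exists a constant C such that for all n ≥ 2, |∑_{i=0}^{n−1} E[(μ̂_i − μ*)²] − var(X)·ln n| ≤ C. -/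
open MeasureTheory ProbabilityTheory Finset

/-!
By the bias–variance decomposition, `E[(μ̂_i − μ*)²] = (n₀²(x₀ − μ*)² + i·var X) / (i + n₀)²`.
This differs from `var X / (i + 1)` by `O(1/(i + n₀)²)`, which is summable, and
`∑_{i<n} 1/(i + 1)` is the harmonic number `H_n`, which lies within `1` of `ln n`.
-/

/-- The modified maximum likelihood estimator
`μ̂_n = (n₀·x₀ + ∑_{i=1}^n X_i) / (n + n₀)`, built from a fake initial outcome `x₀`
counted with multiplicity `n₀` (so `μ̂_0 = x₀`). -/
noncomputable def modML {Ω : Type*} (x₀ n₀ : ℝ) (X : ℕ → Ω → ℝ) (n : ℕ) (ω : Ω) : ℝ :=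
  (n₀ * x₀ + ∑ i ∈ Finset.range n, X i ω) / (n + n₀)

namespace ProbabilityTheory

variable {Ω : Type*} [MeasurableSpace Ω] {μ : Measure Ω}

lemma integral_sub_const_sq [IsProbabilityMeasure μ] {Y : Ω → ℝ} (hY : MemLp Y 2 μ) (a : ℝ) :
    ∫ ω, (Y ω - a) ^ 2 ∂μ = Var[Y; μ] + (μ[Y] - a) ^ 2 := by
  have hYa : MemLp (fun ω ↦ Y ω - a) 2 μ := hY.sub (memLp_const a)
  have hmean : μ[fun ω ↦ Y ω - a] = μ[Y] - a := by
    rw [integral_sub (hY.integrable one_le_two) (integrable_const a), integral_const,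
      probReal_univ, one_smul]
  have hvar := variance_eq_sub hYa
  rw [variance_sub_const hY.aestronglyMeasurable, hmean] at hvar
  rw [hvar]
  simp only [Pi.pow_apply]
  ring

variable {X : ℕ → Ω → ℝ}

lemma integral_sum_range_of_identDistrib (hident : ∀ i, IdentDistrib (X i) (X 0) μ μ)
    (hint : Integrable (X 0) μ) (n : ℕ) :
    μ[fun ω ↦ ∑ i ∈ range n, X i ω] = (n : ℝ) * μ[X 0] := by
  rw [integral_finsetSum _ fun i _ ↦ (hident i).symm.integrable_snd hint]
  simp [fun i ↦ (hident i).integral_eq]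

lemma variance_sum_range_of_identDistrib (hindep : Pairwise fun i j ↦ X i ⟂ᵢ[μ] X j)
    (hident : ∀ i, IdentDistrib (X i) (X 0) μ μ) (hL2 : MemLp (X 0) 2 μ) (n : ℕ) :
    Var[fun ω ↦ ∑ i ∈ range n, X i ω; μ] = n * Var[X 0; μ] := by
  simp_rw [← Finset.sum_apply]
  rw [IndepFun.variance_sum (fun i _ ↦ (hident i).symm.memLp_snd hL2)
    fun i _ j _ hij ↦ hindep hij]
  simp [fun i ↦ (hident i).variance_eq]

end ProbabilityTheory

open ProbabilityTheory

lemma integral_modML_sub_sq {Ω : Type*} [MeasurableSpace Ω] {μ : Measure Ω}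
    [IsProbabilityMeasure μ] {X : ℕ → Ω → ℝ} (hindep : Pairwise fun i j ↦ X i ⟂ᵢ[μ] X j)
    (hident : ∀ i, IdentDistrib (X i) (X 0) μ μ) (hL2 : MemLp (X 0) 2 μ) {x₀ n₀ : ℝ} {i : ℕ}
    (hi : (i : ℝ) + n₀ ≠ 0) :
    ∫ ω, (modML x₀ n₀ X i ω - μ[X 0]) ^ 2 ∂μ
      = ((n₀ * (x₀ - μ[X 0])) ^ 2 + i * Var[X 0; μ]) / (i + n₀) ^ 2 := by
  set m := μ[X 0]
  have hS : MemLp (fun ω ↦ ∑ j ∈ range i, X j ω) 2 μ :=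
    memLp_finsetSum _ fun j _ ↦ (hident j).symm.memLp_snd hL2
  have hrepr : ∀ ω, (modML x₀ n₀ X i ω - m) ^ 2
      = (∑ j ∈ range i, X j ω - (i * m - n₀ * (x₀ - m))) ^ 2 / (i + n₀) ^ 2 := by
    intro ω
    rw [modML, ← div_pow]
    congr 1
    field_simp
    ring
  simp_rw [hrepr]
  rw [integral_div, integral_sub_const_sq hS,
    integral_sum_range_of_identDistrib hident (hL2.integrable one_le_two),
    variance_sum_range_of_identDistrib hindep hident hL2]
  ring

lemma summable_one_div_nat_add_sq (a : ℝ) : Summable fun i : ℕ ↦ 1 / ((i : ℝ) + a) ^ 2 := by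
  refine ((Real.summable_one_div_nat_add_rpow a 2).2 one_lt_two).congr fun i ↦ ?_
  rw [Real.rpow_two, sq_abs]

lemma abs_harmonic_sub_log_le_one (n : ℕ) : |(harmonic n : ℝ) - Real.log n| ≤ 1 := by
  have hlog : Real.log n ≤ Real.log (n + 1) := by
    rcases n.eq_zero_or_pos with rfl | hn
    · simp
    · exact Real.log_le_log (by positivity) (by linarith)
  have hlower := log_add_one_le_harmonic n
  push_cast at hlower
  have hupper := harmonic_le_one_add_log n
  rw [abs_le]
  constructor <;> linarith

lemma abs_div_sq_sub_div_le (c V : ℝ) {n₀ x : ℝ} (hn₀ : 0 < n₀) (hx : 0 ≤ x) :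
    |(c + x * V) / (x + n₀) ^ 2 - V / (x + 1)|
      ≤ (|c| + |V| * (|1 - 2 * n₀| + n₀ ^ 2)) / (x + n₀) ^ 2 := by
  have hxn : 0 < x + n₀ := by linarith
  have hsplit : (c + x * V) / (x + n₀) ^ 2 - V / (x + 1)
      = (c + V * ((x * (1 - 2 * n₀) - n₀ ^ 2) / (x + 1))) / (x + n₀) ^ 2 := by
    field_simp
    ring
  have hfrac : |(x * (1 - 2 * n₀) - n₀ ^ 2) / (x + 1)| ≤ |1 - 2 * n₀| + n₀ ^ 2 := by
    rw [abs_div, abs_of_pos (by linarith : 0 < x + 1), div_le_iff₀ (by linarith)]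
    calc |x * (1 - 2 * n₀) - n₀ ^ 2|
        ≤ x * |1 - 2 * n₀| + n₀ ^ 2 :=
          (abs_sub _ _).trans_eq (by rw [abs_mul, abs_of_nonneg hx, abs_of_nonneg (sq_nonneg n₀)])
      _ ≤ (|1 - 2 * n₀| + n₀ ^ 2) * (x + 1) := by
          nlinarith [abs_nonneg (1 - 2 * n₀), sq_nonneg n₀]
  rw [hsplit, abs_div, abs_of_pos (by positivity : 0 < (x + n₀) ^ 2)]
  gcongr
  calc |c + V * ((x * (1 - 2 * n₀) - n₀ ^ 2) / (x + 1))|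
      ≤ |c| + |V| * |(x * (1 - 2 * n₀) - n₀ ^ 2) / (x + 1)| :=
        (abs_add_le _ _).trans_eq (by rw [abs_mul])
    _ ≤ |c| + |V| * (|1 - 2 * n₀| + n₀ ^ 2) := by gcongr

lemma exists_abs_sum_div_sq_sub_mul_log_le (c V : ℝ) {n₀ : ℝ} (hn₀ : 0 < n₀) :
    ∃ C, ∀ n : ℕ, |∑ i ∈ range n, (c + i * V) / ((i : ℝ) + n₀) ^ 2 - V * Real.log n| ≤ C := by
  set K := |c| + |V| * (|1 - 2 * n₀| + n₀ ^ 2)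
  refine ⟨K * ∑' i : ℕ, 1 / ((i : ℝ) + n₀) ^ 2 + |V|, fun n ↦ ?_⟩
  have hharm : (harmonic n : ℝ) = ∑ i ∈ range n, 1 / ((i : ℝ) + 1) := by simp [harmonic]
  have hsplit : ∑ i ∈ range n, (c + i * V) / ((i : ℝ) + n₀) ^ 2 - V * Real.log n
      = ∑ i ∈ range n, ((c + i * V) / ((i : ℝ) + n₀) ^ 2 - V / (i + 1))
        + V * ((harmonic n : ℝ) - Real.log n) := by
    rw [hharm, sum_sub_distrib, mul_sub, mul_sum]
    simp only [mul_one_div]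
    ring
  have herr : |∑ i ∈ range n, ((c + i * V) / ((i : ℝ) + n₀) ^ 2 - V / (i + 1))|
      ≤ K * ∑' i : ℕ, 1 / ((i : ℝ) + n₀) ^ 2 := by
    calc _ ≤ ∑ i ∈ range n, |(c + i * V) / ((i : ℝ) + n₀) ^ 2 - V / (i + 1)| :=
          abs_sum_le_sum_abs _ _
      _ ≤ ∑ i ∈ range n, K * (1 / ((i : ℝ) + n₀) ^ 2) := by
          gcongr with i
          rw [mul_one_div]
          exact abs_div_sq_sub_div_le c V hn₀ i.cast_nonneg
      _ ≤ K * ∑' i : ℕ, 1 / ((i : ℝ) + n₀) ^ 2 := by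
          rw [← mul_sum]
          gcongr
          exact (summable_one_div_nat_add_sq n₀).sum_le_tsum _ fun i _ ↦ by positivity
  have hlog : |V * ((harmonic n : ℝ) - Real.log n)| ≤ |V| := by
    rw [abs_mul]
    exact mul_le_of_le_one_right (abs_nonneg V) (abs_harmonic_sub_log_le_one n)
  rw [hsplit]
  exact (abs_add_le _ _).trans (add_le_add herr hlog)

theorem modML_cumulative_sq_dev_general
    {Ω : Type*} [MeasurableSpace Ω] (μ : Measure Ω) [IsProbabilityMeasure μ]
    (X : ℕ → Ω → ℝ)
    (hindep : iIndepFun X μ)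
    (hident : ∀ i, IdentDistrib (X i) (X 0) μ μ)
    (hL2 : MemLp (X 0) 2 μ)
    (μstar : ℝ) (hμstar : μstar = ∫ ω, X 0 ω ∂μ)
    (x₀ n₀ : ℝ) (hn₀ : 0 < n₀) :
    ∃ C : ℝ, ∀ n : ℕ, 2 ≤ n →
      |(∑ i ∈ Finset.range n, ∫ ω, (modML x₀ n₀ X i ω - μstar) ^ 2 ∂μ)
          - variance (X 0) μ * Real.log n| ≤ C := by
  subst hμstar
  obtain ⟨C, hC⟩ :=
    exists_abs_sum_div_sq_sub_mul_log_le ((n₀ * (x₀ - μ[X 0])) ^ 2) Var[X 0; μ] hn₀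
  refine ⟨C, fun n _ ↦ ?_⟩
  convert hC n using 3
  exact sum_congr rfl fun i _ ↦
    integral_modML_sub_sq (fun i j hij ↦ hindep.indepFun hij) hident hL2 (by positivity)

/-- for i.i.d. `X, X₁, X₂, …` with finite variance and mean
`μ* = E[X]`, the accumulated squared deviations of the modified ML estimator satisfy
`∑_{i=0}^{n−1} E[(μ̂_i − μ*)²] = var(X)·ln n + O(1)`. -/
theorem modML_cumulative_sq_dev
    {Ω : Type*} [MeasurableSpace Ω] (μ : Measure Ω) [IsProbabilityMeasure μ]
    (X : ℕ → Ω → ℝ)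
    (hmeas : ∀ i, Measurable (X i))
    (hindep : iIndepFun X μ)
    (hident : ∀ i, IdentDistrib (X i) (X 0) μ μ)
    (hL2 : MemLp (X 0) 2 μ)
    (μstar : ℝ) (hμstar : μstar = ∫ ω, X 0 ω ∂μ)
    (x₀ n₀ : ℝ) (hn₀ : 0 < n₀) :
    ∃ C : ℝ, ∀ n : ℕ, 2 ≤ n →
      |(∑ i ∈ Finset.range n, ∫ ω, (modML x₀ n₀ X i ω - μstar) ^ 2 ∂μ)
          - variance (X 0) μ * Real.log n| ≤ C :=
  modML_cumulative_sq_dev_general μ X hindep hident hL2 μstar hμstar x₀ n₀ hn₀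
end

section
/- Let X, X₁, X₂, … be i.i.d. real random variables with E[|X|³] < ∞, let μ* = E[X], and define μ̂_n = (n₀·x₀ + ∑_{i=1}^n X_i)/(n + n₀) for fixed constants x₀ ∈ ℝ and n₀ > 0. Then the series ∑_{i=1}^∞ |E[(μ̂_i − μ*)³]| converges; in particular, for any constant c, the partial sums ∑_{i=1}^{n−1} c·E[(μ̂_i − μ*)³] remain bounded as n → ∞. -/
open MeasureTheory ProbabilityTheory Finset

/-!
Writing `Y i = X i - μ*` and `a = n₀ (x₀ - μ*)`, we have `μ̂_n - μ* = (a + ∑_{i<n} Y i) / (n + n₀)`.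
When `T` is independent of a centred `Y`, the cross term `3 T² Y` of `(T + Y)³` has mean zero,
so by induction `E[(a + ∑_{i<n} Y i)³] = a³ + n (3 a σ² + γ)` with `σ² = E[Y²]`, `γ = E[Y³]`.
Thus `E[(μ̂_n - μ*)³]` grows like `n / n³ = 1 / n²`, which is summable.
-/

section
variable {Ω : Type*} [MeasurableSpace Ω] {μ : Measure Ω}

lemma MeasureTheory.MemLp.integrable_pow_three {f : Ω → ℝ} (hf : MemLp f 3 μ) :
    Integrable (fun ω => f ω ^ 3) μ :=
  (integrable_norm_iff (hf.aestronglyMeasurable.pow 3)).mp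
    (by simpa [norm_pow] using hf.integrable_norm_pow three_ne_zero)

lemma memLp_three_of_integrable_abs_pow {f : Ω → ℝ} (hf : AEStronglyMeasurable f μ)
    (h : Integrable (fun ω => |f ω| ^ 3) μ) : MemLp f 3 μ :=
  (integrable_norm_rpow_iff hf (by norm_num) (by norm_num)).mp (by simpa using h)

lemma integral_add_pow_three_of_indepFun [IsFiniteMeasure μ] {T Y : Ω → ℝ}
    (hT : MemLp T 3 μ) (hY : MemLp Y 3 μ) (hTY : IndepFun T Y μ) (hY0 : μ[Y] = 0) :
    ∫ ω, (T ω + Y ω) ^ 3 ∂μ = ∫ ω, T ω ^ 3 ∂μ + 3 * μ[T] * ∫ ω, Y ω ^ 2 ∂μ + ∫ ω, Y ω ^ 3 ∂μ := by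
  have hT2 : IndepFun (fun ω => T ω ^ 2) Y μ := hTY.comp (measurable_id.pow_const 2) measurable_id
  have hY2 : IndepFun T (fun ω => Y ω ^ 2) μ := hTY.comp measurable_id (measurable_id.pow_const 2)
  have hTsq := (hT.mono_exponent (by norm_num : (2 : ENNReal) ≤ 3)).integrable_sq
  have hYsq := (hY.mono_exponent (by norm_num : (2 : ENNReal) ≤ 3)).integrable_sq
  have hT1 := hT.integrable (by norm_num)
  have hY1 := hY.integrable (by norm_num)
  have hTTY : ∫ ω, T ω ^ 2 * Y ω ∂μ = 0 := by
    rw [hT2.integral_fun_mul_eq_mul_integral hTsq.1 hY1.1, hY0, mul_zero]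
  have hTYY : ∫ ω, T ω * Y ω ^ 2 ∂μ = μ[T] * ∫ ω, Y ω ^ 2 ∂μ :=
    hY2.integral_fun_mul_eq_mul_integral hT1.1 hYsq.1
  have hexp : (fun ω => (T ω + Y ω) ^ 3) =
      fun ω => T ω ^ 3 + 3 * (T ω ^ 2 * Y ω) + 3 * (T ω * Y ω ^ 2) + Y ω ^ 3 := by
    ext ω; ring
  have hTcube := hT.integrable_pow_three
  have hcross₁ : Integrable (fun ω => 3 * (T ω ^ 2 * Y ω)) μ :=
    (hT2.integrable_mul hTsq hY1).const_mul 3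
  have hcross₂ : Integrable (fun ω => 3 * (T ω * Y ω ^ 2)) μ :=
    (hY2.integrable_mul hT1 hYsq).const_mul 3
  rw [hexp, integral_add ((hTcube.fun_add hcross₁).fun_add hcross₂) hY.integrable_pow_three,
    integral_add (hTcube.fun_add hcross₁) hcross₂, integral_add hTcube hcross₁,
    integral_const_mul, integral_const_mul, hTTY, hTYY]
  ring

lemma integral_const_add_sum_range_pow_three [IsProbabilityMeasure μ] {Y : ℕ → Ω → ℝ}
    (hmeas : ∀ i, Measurable (Y i)) (hindep : iIndepFun Y μ) (hmem : ∀ i, MemLp (Y i) 3 μ)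
    (hmean : ∀ i, μ[Y i] = 0) {σ2 γ : ℝ} (hsq : ∀ i, ∫ ω, Y i ω ^ 2 ∂μ = σ2)
    (hcube : ∀ i, ∫ ω, Y i ω ^ 3 ∂μ = γ) (a : ℝ) (n : ℕ) :
    ∫ ω, (a + ∑ i ∈ range n, Y i ω) ^ 3 ∂μ = a ^ 3 + n * (3 * a * σ2 + γ) := by
  induction n with
  | zero => simp
  | succ n ih =>
    have hmemT : MemLp (fun ω => a + ∑ i ∈ range n, Y i ω) 3 μ :=
      (memLp_const a).add (memLp_finsetSum _ fun i _ => hmem i)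
    have hmeanT : ∫ ω, a + ∑ i ∈ range n, Y i ω ∂μ = a := by
      have hint i : Integrable (Y i) μ := (hmem i).integrable (by norm_num)
      rw [integral_add (integrable_const a) (integrable_finsetSum _ fun i _ => hint i),
        integral_finsetSum _ fun i _ => hint i]
      simp [hmean]
    have hindepT : IndepFun (fun ω => a + ∑ i ∈ range n, Y i ω) (Y n) μ := by
      have h := (hindep.indepFun_sum_range_succ hmeas n).comp (measurable_const_add a) measurable_id
      convert h using 1 <;> ext ω <;> simp
    simp_rw [sum_range_succ, ← add_assoc]
    rw [integral_add_pow_three_of_indepFun hmemT (hmem n) hindepT (hmean n), ih, hmeanT, hsq,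
      hcube]
    push_cast; ring

end

lemma summable_abs_affine_div_cube (A K : ℝ) {n₀ : ℝ} (hn₀ : 0 ≤ n₀) :
    Summable fun i : ℕ => |(A + ((i : ℝ) + 1) * K) / ((i + 1) + n₀) ^ 3| := by
  have hp : Summable fun i : ℕ => (((i + 1 : ℕ) : ℝ) ^ 2)⁻¹ :=
    (summable_nat_add_iff 1).mpr (Real.summable_nat_pow_inv.mpr one_lt_two)
  refine .of_nonneg_of_le (fun _ => abs_nonneg _) (fun i => ?_) (hp.mul_left (|A| + |K|))
  have hm : (1 : ℝ) ≤ i + 1 := by simp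
  push_cast
  set m : ℝ := i + 1
  have hnum : |A + m * K| ≤ m * (|A| + |K|) := by
    rw [mul_add]
    refine (abs_add_le _ _).trans (add_le_add ?_ ?_)
    · nlinarith [abs_nonneg A]
    · rw [abs_mul, abs_of_nonneg (by linarith)]
  have hm₀ : 0 < m := by linarith
  calc |(A + m * K) / (m + n₀) ^ 3| ≤ m * (|A| + |K|) / m ^ 3 := by
        rw [abs_div, abs_of_pos (pow_pos (by linarith : 0 < m + n₀) 3)]
        exact div_le_div₀ (by positivity) hnum (pow_pos hm₀ 3) (by gcongr; linarith)
    _ = (|A| + |K|) * (m ^ 2)⁻¹ := by field_simp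

lemma exists_abs_sum_Ico_one_mul_le {f : ℕ → ℝ} (hf : Summable fun i => |f (i + 1)|) (c : ℝ) :
    ∃ B, ∀ n, |∑ i ∈ Ico 1 n, c * f i| ≤ B := by
  refine ⟨|c| * ∑' i, |f (i + 1)|, fun n => ?_⟩
  rw [← mul_sum, abs_mul, sum_Ico_eq_sum_range]
  gcongr
  calc |∑ k ∈ range (n - 1), f (1 + k)| ≤ ∑ k ∈ range (n - 1), |f (k + 1)| := by
        simpa only [add_comm] using abs_sum_le_sum_abs _ _
    _ ≤ ∑' i, |f (i + 1)| := hf.sum_le_tsum _ fun i _ => abs_nonneg _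

lemma modML_sub_eq_div {Ω : Type*} (x₀ n₀ m : ℝ) (X : ℕ → Ω → ℝ) {n : ℕ} (hn : (n : ℝ) + n₀ ≠ 0)
    (ω : Ω) :
    modML x₀ n₀ X n ω - m = (n₀ * (x₀ - m) + ∑ i ∈ range n, (X i ω - m)) / (n + n₀) := by
  rw [modML, sum_sub_distrib, sum_const, card_range, nsmul_eq_mul]
  field_simp
  ring

theorem integral_modML_sub_integral_pow_three {Ω : Type*} [MeasurableSpace Ω] {μ : Measure Ω}
    [IsProbabilityMeasure μ] {X : ℕ → Ω → ℝ} (hmeas : ∀ i, Measurable (X i))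
    (hindep : iIndepFun X μ) (hident : ∀ i, IdentDistrib (X i) (X 0) μ μ) (hmem : MemLp (X 0) 3 μ)
    (x₀ n₀ : ℝ) {n : ℕ} (hn : (n : ℝ) + n₀ ≠ 0) :
    ∫ ω, (modML x₀ n₀ X n ω - μ[X 0]) ^ 3 ∂μ =
      ((n₀ * (x₀ - μ[X 0])) ^ 3 + n * (3 * (n₀ * (x₀ - μ[X 0])) * ∫ ω, (X 0 ω - μ[X 0]) ^ 2 ∂μ
        + ∫ ω, (X 0 ω - μ[X 0]) ^ 3 ∂μ)) / (n + n₀) ^ 3 := by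
  set m := μ[X 0]
  have hident' i : IdentDistrib (fun ω => X i ω - m) (fun ω => X 0 ω - m) μ μ :=
    (hident i).comp (measurable_sub_const m)
  have hmean i : ∫ ω, X i ω - m ∂μ = 0 := by
    rw [(hident' i).integral_eq, integral_sub (hmem.integrable (by norm_num)) (integrable_const m)]
    simp [m]
  simp_rw [modML_sub_eq_div x₀ n₀ m X hn, div_pow]
  rw [integral_div, integral_const_add_sum_range_pow_three (fun i => (hmeas i).sub_const m)
    (hindep.comp _ fun _ => measurable_sub_const m)
    (fun i => (hident' i).memLp_iff.mpr (hmem.sub (memLp_const m))) hmean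
    (fun i => ((hident' i).comp (measurable_id.pow_const 2)).integral_eq)
    (fun i => ((hident' i).comp (measurable_id.pow_const 3)).integral_eq)]
  rfl

/-- for i.i.d. `X, X₁, X₂, …` with `E[|X|³] < ∞` and mean
`μ* = E[X]`, the series `∑_{i=1}^∞ |E[(μ̂_i − μ*)³]|` converges; in particular,
for any constant `c` the partial sums `∑_{i=1}^{n−1} c·E[(μ̂_i − μ*)³]` remain
bounded as `n → ∞`. -/
theorem modML_third_order_summable
    {Ω : Type*} [MeasurableSpace Ω] (μ : Measure Ω) [IsProbabilityMeasure μ]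
    (X : ℕ → Ω → ℝ)
    (hmeas : ∀ i, Measurable (X i))
    (hindep : iIndepFun X μ)
    (hident : ∀ i, IdentDistrib (X i) (X 0) μ μ)
    (hmom : Integrable (fun ω => |X 0 ω| ^ 3) μ)
    (μstar : ℝ) (hμstar : μstar = ∫ ω, X 0 ω ∂μ)
    (x₀ n₀ : ℝ) (hn₀ : 0 < n₀) :
    (Summable fun i : ℕ => |∫ ω, (modML x₀ n₀ X (i + 1) ω - μstar) ^ 3 ∂μ|) ∧
      ∀ c : ℝ, ∃ B : ℝ, ∀ n : ℕ,
        |∑ i ∈ Finset.Ico 1 n, c * ∫ ω, (modML x₀ n₀ X i ω - μstar) ^ 3 ∂μ| ≤ B := by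
  subst hμstar
  have hS : Summable fun i : ℕ => |∫ ω, (modML x₀ n₀ X (i + 1) ω - μ[X 0]) ^ 3 ∂μ| := by
    simp_rw [integral_modML_sub_integral_pow_three hmeas hindep hident
      (memLp_three_of_integrable_abs_pow (hmeas 0).aestronglyMeasurable hmom) x₀ n₀
      (by positivity : ((_ + 1 : ℕ) : ℝ) + n₀ ≠ 0)]
    push_cast
    exact summable_abs_affine_div_cube _ _ hn₀.le
  exact ⟨hS, exists_abs_sum_Ico_one_mul_le hS⟩
end
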